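/- Let p be an odd prime, q = p^m, and a ∈ F_q^*. Writing Tr(a x^2) in diagonal form a_1 y_1^2 + ... + a_m y_m^2 over F_p (all a_i ≠ 0) with determinant Δ_a = a_1...a_m, exactly half the elements a ∈ F_q^* satisfy η((-1)^{m/2} Δ_a) = 1 and exactly half satisfy η((-1)^{m/2} Δ_a) = -1, when m is even; here η is the quadratic character of F_p. -/

import Mathlib

/-!
Fix a primitive additive character `ψ` of `𝔽_p` and evaluate `∑_{x ∈ 𝔽_q} ψ(Tr(a x²))` in two
ways: coordinatewise through the diagonal form, it is `∏ᵢ ∑_c ψ(aᵢ c²) = η(Δ_a) g_p^m`; directly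
over `𝔽_q`, with the primitive character `ψ ∘ Tr`, it is `χ(a) g_q`. Here `χ` is the quadratic
character of `𝔽_q` and `g_p`, `g_q` are the quadratic Gauss sums, with `g_p ≠ 0`. Comparing with
`a = 1` gives `η((-1)^{m/2} Δ_a) = ε χ(a)` for the sign `ε = η((-1)^{m/2} Δ_1)`, and `χ` takes the
values `1` and `-1` equally often on `𝔽_q^*`.
-/

open Finset

theorem AddChar.map_sum {A M ι : Type*} [AddCommMonoid A] [CommMonoid M] (ψ : AddChar A M)
    (s : Finset ι) (f : ι → A) : ψ (∑ i ∈ s, f i) = ∏ i ∈ s, ψ (f i) :=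
  map_prod ψ.toMonoidHom (fun i ↦ Multiplicative.ofAdd (f i)) s

noncomputable def quadraticGaussSum {F R : Type*} [Field F] [Fintype F] [DecidableEq F]
    [CommRing R] (ψ : AddChar F R) : R :=
  gaussSum ((quadraticChar F).ringHomComp (Int.castRingHom R)) ψ

section QuadraticGaussSum

variable {F R : Type*} [Field F] [Fintype F] [DecidableEq F] [CommRing R] [IsDomain R]

theorem sum_addChar_mul_sq (hF : ringChar F ≠ 2) {ψ : AddChar F R} (hψ : ψ.IsPrimitive)
    {b : F} (hb : b ≠ 0) :
    ∑ x, ψ (b * x ^ 2) = quadraticChar F b * quadraticGaussSum ψ := by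
  set χ := (quadraticChar F).ringHomComp (Int.castRingHom R)
  have hsqrts (t : F) : (#{x | x ^ 2 = t} : R) = χ t + 1 := by
    have := quadraticChar_card_sqrts hF t
    simp only [Set.toFinset_ofPred] at this
    simp only [χ, MulChar.ringHomComp_apply, eq_intCast]
    rw [← Int.cast_natCast, this, Int.cast_add, Int.cast_one]
  have hχb : χ⁻¹ b = χ b := by
    rw [((quadraticChar_isQuadratic F).comp _).inv]
  calc ∑ x, ψ (b * x ^ 2) = ∑ t, (χ t + 1) * ψ (b * t) := by
        rw [← sum_fiberwise' univ (· ^ 2) fun t ↦ ψ (b * t)]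
        simp only [sum_const, nsmul_eq_mul, hsqrts]
    _ = gaussSum χ (ψ.mulShift b) + ∑ t, ψ.mulShift b t := by
        simp only [add_mul, one_mul, sum_add_distrib, gaussSum, AddChar.mulShift_apply]
    _ = χ b * gaussSum χ ψ := by
        have := gaussSum_mulShift_eq χ ψ (Units.mk0 b hb)
        rw [Units.val_mk0] at this
        rw [AddChar.sum_eq_zero_of_ne_one (hψ hb), add_zero, this, hχb]
    _ = quadraticChar F b * quadraticGaussSum ψ := rfl

theorem quadraticGaussSum_ne_zero [CharZero R] (hF : ringChar F ≠ 2) {ψ : AddChar F R}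
    (hψ : ψ.IsPrimitive) : quadraticGaussSum ψ ≠ 0 :=
  gaussSum_ne_zero_of_nontrivial (Nat.cast_ne_zero.mpr Fintype.card_ne_zero)
    ((MulChar.ringHomComp_ne_one_iff (RingHom.injective_int _)).mpr (quadraticChar_ne_one hF)) hψ

end QuadraticGaussSum

section Counting

variable {F : Type*} [Field F] [Fintype F] [DecidableEq F]

theorem card_quadraticChar_eq_one_eq_card_eq_neg_one (hF : ringChar F ≠ 2) :
    #{a | quadraticChar F a = 1} = #{a | quadraticChar F a = -1} := by
  obtain ⟨c, hc⟩ := quadraticChar_exists_neg_one hF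
  have hc0 : c ≠ 0 := by rintro rfl; simp at hc
  have hcinv : quadraticChar F c⁻¹ = -1 := by
    rw [← MulChar.inv_apply', (quadraticChar_isQuadratic F).inv, hc]
  refine card_nbij' (c * ·) (c⁻¹ * ·) (fun a ha ↦ ?_) (fun a ha ↦ ?_)
    (fun a _ ↦ inv_mul_cancel_left₀ hc0 a) (fun a _ ↦ mul_inv_cancel_left₀ hc0 a) <;>
  simp only [coe_filter, mem_univ, true_and, Set.mem_ofPred_eq, map_mul] at ha ⊢
  · rw [hc, ha]; rfl
  · rw [hcinv, ha]; rfl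

theorem card_quadraticChar_eq_one_add_card_eq_neg_one :
    #{a | quadraticChar F a = 1} + #{a | quadraticChar F a = -1} = Fintype.card F - 1 := by
  rw [← card_union_of_disjoint (disjoint_filter.mpr fun a _ h ↦ by rw [h]; decide),
    ← filter_or, ← card_univ, ← card_erase_of_mem (mem_univ 0)]
  congr 1
  ext a
  simp only [mem_filter, mem_univ, true_and, mem_erase, and_true]
  exact ⟨fun h ha ↦ by rw [ha, MulChar.map_zero] at h; omega, quadraticChar_dichotomy⟩

theorem card_quadraticChar_eq (hF : ringChar F ≠ 2) {v : ℤ} (hv : v = 1 ∨ v = -1) :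
    #{a | quadraticChar F a = v} = (Fintype.card F - 1) / 2 := by
  have h₁ := card_quadraticChar_eq_one_eq_card_eq_neg_one hF
  have h₂ := card_quadraticChar_eq_one_add_card_eq_neg_one (F := F)
  rcases hv with rfl | rfl <;> omega

theorem natCard_eq_of_eq_mul_quadraticChar (hF : ringChar F ≠ 2) {f : F → ℤ} {ε : ℤ}
    (hε : ε = 1 ∨ ε = -1) (hf : ∀ a ≠ 0, f a = ε * quadraticChar F a) {v : ℤ}
    (hv : v = 1 ∨ v = -1) :
    Nat.card {a : F // a ≠ 0 ∧ f a = v} = (Fintype.card F - 1) / 2 := by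
  have hεε : ε * ε = 1 := by rcases hε with rfl | rfl <;> rfl
  have hεv : ε * v = 1 ∨ ε * v = -1 :=
    Int.isUnit_iff.mp ((Int.isUnit_iff.mpr hε).mul (Int.isUnit_iff.mpr hv))
  rw [Nat.card_eq_fintype_card, Fintype.card_subtype, ← card_quadraticChar_eq hF hεv]
  congr 1
  ext a
  simp only [mem_filter, mem_univ, true_and]
  by_cases ha : a = 0
  · simp only [ha, ne_eq, not_true_eq_false, false_and, MulChar.map_zero, false_iff]
    omega
  · rw [hf a ha, and_iff_right ha]
    constructor
    · rintro rfl
      rw [← mul_assoc, hεε, one_mul]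
    · intro h
      rw [h, ← mul_assoc, hεε, one_mul]

end Counting

def IsDiagonalization {K V ι : Type*} [CommRing K] [Fintype ι] (Q : V → K) (d : ι → K)
    (e : V ≃ (ι → K)) : Prop :=
  (∀ i, d i ≠ 0) ∧ ∀ x, Q x = ∑ i, d i * e x i ^ 2

theorem IsDiagonalization.sum_addChar {K V ι R : Type*} [Field K] [Fintype K] [DecidableEq K]
    [Fintype V] [Fintype ι] [CommRing R] [IsDomain R] (hK : ringChar K ≠ 2)
    {ψ : AddChar K R} (hψ : ψ.IsPrimitive) {Q : V → K} {d : ι → K} {e : V ≃ (ι → K)}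
    (h : IsDiagonalization Q d e) :
    ∑ x, ψ (Q x) = quadraticChar K (∏ i, d i) * quadraticGaussSum ψ ^ Fintype.card ι := by
  classical
  calc ∑ x, ψ (Q x) = ∑ y : ι → K, ∏ i, ψ (d i * y i ^ 2) := by
        refine Fintype.sum_equiv e _ _ fun x ↦ ?_
        rw [h.2, AddChar.map_sum]
    _ = ∏ i, ∑ c, ψ (d i * c ^ 2) :=
        (Fintype.prod_sum fun i c ↦ ψ (d i * c ^ 2)).symm
    _ = ∏ i, (quadraticChar K (d i) * quadraticGaussSum ψ) :=
        prod_congr rfl fun i _ ↦ sum_addChar_mul_sq hK hψ (h.1 i)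
    _ = quadraticChar K (∏ i, d i) * quadraticGaussSum ψ ^ Fintype.card ι := by
        rw [prod_mul_distrib, prod_const, card_univ, map_prod, Int.cast_prod]

theorem AddChar.isPrimitive_compAddMonoidHom_trace {K L R : Type*} [Field K] [Field L]
    [Algebra K L] [FiniteDimensional K L] [Algebra.IsSeparable K L] [CommMonoid R]
    {ψ : AddChar K R} (hψ : ψ ≠ 1) :
    (ψ.compAddMonoidHom (Algebra.trace K L).toAddMonoidHom).IsPrimitive := by
  refine IsPrimitive.of_ne_one fun h ↦ hψ ?_
  refine compAddMonoidHom_injective_left _ (Algebra.trace_surjective K L) (h.trans ?_)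
  rfl

theorem quadraticChar_prod_mul_quadraticChar_eq {K L ι : Type*} [Field K] [Fintype K]
    [DecidableEq K] [Field L] [Fintype L] [DecidableEq L] [Algebra K L] [Fintype ι]
    (hK : ringChar K ≠ 2) {a b : L} (ha : a ≠ 0) (hb : b ≠ 0) {dₐ d_b : ι → K}
    {eₐ e_b : L ≃ (ι → K)}
    (hₐ : IsDiagonalization (fun x ↦ Algebra.trace K L (a * x ^ 2)) dₐ eₐ)
    (h_b : IsDiagonalization (fun x ↦ Algebra.trace K L (b * x ^ 2)) d_b e_b) :
    quadraticChar K (∏ i, dₐ i) * quadraticChar L b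
      = quadraticChar L a * quadraticChar K (∏ i, d_b i) := by
  have hL : ringChar L ≠ 2 := by rwa [← Algebra.ringChar_eq K L]
  let ψ := AddChar.FiniteField.primitiveChar K ℂ (by
    rw [ringChar.eq_zero]; exact (CharP.ringChar_ne_zero_of_finite K).symm)
  let Ψ := ψ.char.compAddMonoidHom (Algebra.trace K L).toAddMonoidHom
  have hΨ : Ψ.IsPrimitive := AddChar.isPrimitive_compAddMonoidHom_trace <| by
    simpa using ψ.prim one_ne_zero
  have key {c : L} (hc : c ≠ 0) {d : ι → K} {e : L ≃ (ι → K)}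
      (h : IsDiagonalization (fun x ↦ Algebra.trace K L (c * x ^ 2)) d e) :
      quadraticChar K (∏ i, d i) * quadraticGaussSum ψ.char ^ Fintype.card ι
        = quadraticChar L c * quadraticGaussSum Ψ :=
    (h.sum_addChar hK ψ.prim).symm.trans (sum_addChar_mul_sq hL hΨ hc)
  have hG := pow_ne_zero (Fintype.card ι) (quadraticGaussSum_ne_zero hK ψ.prim)
  refine Int.cast_injective (α := CyclotomicField ψ.n ℂ) (mul_right_cancel₀ hG ?_)
  push_cast
  linear_combination (quadraticChar L b : CyclotomicField ψ.n ℂ) * key ha hₐ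
    - (quadraticChar L a : CyclotomicField ψ.n ℂ) * key hb h_b

theorem stmt_13_general (p m : ℕ) [Fact p.Prime] (hodd : p ≠ 2)
    (F : Type*) [Field F] [Fintype F] [Algebra (ZMod p) F]
    (hcard : Fintype.card F = p ^ m)
    (e : F → (F ≃ₗ[ZMod p] (Fin m → ZMod p))) (d : F → Fin m → ZMod p)
    (hdiag : ∀ a : F, a ≠ 0 → (∀ i, d a i ≠ 0) ∧
      ∀ x : F, Algebra.trace (ZMod p) F (a * x ^ 2) = ∑ i, d a i * (e a x i) ^ 2) :
    Nat.card {a : F // a ≠ 0 ∧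
        quadraticChar (ZMod p) ((-1) ^ (m / 2) * ∏ i, d a i) = 1} = (p ^ m - 1) / 2 ∧
    Nat.card {a : F // a ≠ 0 ∧
        quadraticChar (ZMod p) ((-1) ^ (m / 2) * ∏ i, d a i) = -1} = (p ^ m - 1) / 2 := by
  classical
  have hK : ringChar (ZMod p) ≠ 2 := by rwa [ZMod.ringChar_zmod_n]
  have hF : ringChar F ≠ 2 := by rwa [← Algebra.ringChar_eq (ZMod p) F]
  set η := quadraticChar (ZMod p)
  have hdisc (a : F) (ha : a ≠ 0) : η ((-1) ^ (m / 2) * ∏ i, d a i)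
      = η ((-1) ^ (m / 2) * ∏ i, d 1 i) * quadraticChar F a := by
    have h := quadraticChar_prod_mul_quadraticChar_eq hK ha one_ne_zero
      (eₐ := (e a).toEquiv) (e_b := (e 1).toEquiv) (hdiag a ha) (hdiag 1 one_ne_zero)
    rw [map_one, mul_one] at h
    rw [map_mul, map_mul, h]
    ring
  have hε : η ((-1) ^ (m / 2) * ∏ i, d 1 i) = 1 ∨ η ((-1) ^ (m / 2) * ∏ i, d 1 i) = -1 :=
    quadraticChar_dichotomy <| mul_ne_zero (pow_ne_zero _ (neg_ne_zero.mpr one_ne_zero))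
      (prod_ne_zero_iff.mpr fun i _ ↦ (hdiag 1 one_ne_zero).1 i)
  rw [← hcard]
  exact ⟨natCard_eq_of_eq_mul_quadraticChar hF hε hdisc (.inl rfl),
    natCard_eq_of_eq_mul_quadraticChar hF hε hdisc (.inr rfl)⟩

/-- `m` even. Diagonalizing `Tr(a x²)` as `∑ dᵢ yᵢ²` over `F_p` for
each `a ∈ F_q^*`, exactly half the elements of `F_q^*` have discriminant class
`η((-1)^{m/2} Δ_a) = 1` and exactly half have class `-1`. -/
theorem stmt_13 (p m : ℕ) [Fact p.Prime] (hodd : p ≠ 2) (hm : 0 < m) (heven : Even m)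
    (F : Type*) [Field F] [Fintype F] [Algebra (ZMod p) F]
    (hcard : Fintype.card F = p ^ m)
    (e : F → (F ≃ₗ[ZMod p] (Fin m → ZMod p))) (d : F → Fin m → ZMod p)
    (hdiag : ∀ a : F, a ≠ 0 → (∀ i, d a i ≠ 0) ∧
      ∀ x : F, Algebra.trace (ZMod p) F (a * x ^ 2) = ∑ i, d a i * (e a x i) ^ 2) :
    Nat.card {a : F // a ≠ 0 ∧
        quadraticChar (ZMod p) ((-1) ^ (m / 2) * ∏ i, d a i) = 1} = (p ^ m - 1) / 2 ∧
    Nat.card {a : F // a ≠ 0 ∧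
        quadraticChar (ZMod p) ((-1) ^ (m / 2) * ∏ i, d a i) = -1} = (p ^ m - 1) / 2 :=
  stmt_13_general p m hodd F hcard e d hdiag
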